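/- arXiv:2603.22610 — 3 statements merged into one kernel-verified Lean document; each statement's English description precedes it below -/
import Mathlib

section
/- With notation as above (K field, σ ∈ Aut(K) with σ^n = id, p ∈ K^× fixed by σ, ι and b as defined), the subset D = { Σ_{i=0}^{n−1} ι(a_i)·b^i : a_0,…,a_{n−1} ∈ K } of M_n(K) is a subring of M_n(K), and the map K^n → M_n(K), (a_0,…,a_{n−1}) ↦ Σ_{i=0}^{n−1} ι(a_i)·b^i, is injective and additive. -/
/-!
The matrix `b` shifts the standard row vectors, `e_r b = e_{r+1}` for `r < n - 1` and
`e_{n-1} b = p e_0`; hence `e_0 b^i = e_i` for `i < n` and `b^n = p·1`. Since `σ^n = 1`, the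
`j`-th diagonal entry of `ι(a)` is `σ^{-j}(a)`, which gives `b ι(a) = ι(σ^{-1} a) b`. So every
product `ι(a) b^i · ι(a') b^j = ι(a σ^{-i}(a') p^q) b^r`, where `i + j = q n + r` with `r < n`,
lies in `D`, and `D` is a subring. Injectivity: row `0` of `Σ ι(a_i) b^i` is
`(a_0, …, a_{n-1})`.
-/

def bMat (n : ℕ) (K : Type*) [Field K] (p : K) : Matrix (Fin n) (Fin n) K :=
  Matrix.of fun i j =>
    if (i : ℕ) + 1 = (j : ℕ) then 1
    else if (i : ℕ) = n - 1 ∧ (j : ℕ) = 0 then p else 0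

def iotaMat (n : ℕ) (K : Type*) [Field K] (σ : K ≃+* K) (a : K) :
    Matrix (Fin n) (Fin n) K :=
  Matrix.diagonal fun j : Fin n => (σ ^ (n - (j : ℕ))) a

/-- `D = { Σ_{i=0}^{n-1} ι(a_i)·b^i : a_i ∈ K }`. -/
def Dset (n : ℕ) (K : Type*) [Field K] (σ : K ≃+* K) (p : K) :
    Set (Matrix (Fin n) (Fin n) K) :=
  {x | ∃ a : Fin n → K, x = ∑ i : Fin n, iotaMat n K σ (a i) * bMat n K p ^ (i : ℕ)}

open Matrix

theorem pow_sub_eq_inv_pow {G : Type*} [Group G] {g : G} {n j : ℕ} (hg : g ^ n = 1)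
    (hj : j ≤ n) : g ^ (n - j) = g⁻¹ ^ j := by
  rw [pow_sub g hj, hg, one_mul, inv_pow]

section iotaMat

variable {n : ℕ} {K : Type*} [Field K] (σ : K ≃+* K)

theorem iotaMat_add (a b : K) : iotaMat n K σ (a + b) = iotaMat n K σ a + iotaMat n K σ b := by
  simp [iotaMat]

theorem iotaMat_mul (a b : K) : iotaMat n K σ (a * b) = iotaMat n K σ a * iotaMat n K σ b := by
  simp [iotaMat]

@[simp] theorem iotaMat_zero : iotaMat n K σ 0 = 0 := by simp [iotaMat]

@[simp] theorem iotaMat_one : iotaMat n K σ 1 = 1 := by simp [iotaMat]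

theorem iotaMat_eq_diagonal_inv_pow (hσ : σ ^ n = 1) (a : K) :
    iotaMat n K σ a = diagonal fun j : Fin n => (σ⁻¹ ^ (j : ℕ)) a := by
  unfold iotaMat
  congr 1
  funext j
  rw [pow_sub_eq_inv_pow hσ j.isLt.le]

theorem iotaMat_of_isFixedPt {c : K} (hc : σ c = c) : iotaMat n K σ c = scalar (Fin n) c := by
  rw [iotaMat, scalar_apply]
  congr 1
  funext j
  rw [RingAut.coe_pow]
  exact Function.IsFixedPt.iterate hc _

end iotaMat

section bMat

variable {n : ℕ} {K : Type*} [Field K] (p : K)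

theorem bMat_row_of_lt (r : Fin n) (h : (r : ℕ) + 1 < n) :
    bMat n K p r = Pi.single ⟨r + 1, h⟩ 1 := by
  ext c
  simp only [bMat, of_apply, Pi.single_apply, Fin.ext_iff]
  split_ifs <;> first | rfl | omega

theorem bMat_row_last (h : 0 < n) : bMat n K p ⟨n - 1, by omega⟩ = Pi.single ⟨0, h⟩ p := by
  ext c
  simp [bMat, Pi.single_apply, Fin.ext_iff]
  omega

theorem bMat_pow_row_of_lt (r : Fin n) {k : ℕ} (h : (r : ℕ) + k < n) :
    (bMat n K p ^ k) r = Pi.single ⟨r + k, h⟩ 1 := by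
  induction k with
  | zero => ext c; simp [one_apply, Pi.single_apply, eq_comm]
  | succ k ih =>
    rw [pow_succ, mul_apply_eq_vecMul, ih (by omega), single_one_vecMul, row,
      bMat_row_of_lt p _ (by simp only; omega)]
    rfl

theorem bMat_pow_row_zero (hn : 0 < n) (i : Fin n) :
    (bMat n K p ^ (i : ℕ)) ⟨0, hn⟩ = Pi.single i 1 := by
  rw [bMat_pow_row_of_lt p _ (by simp)]
  simp

theorem bMat_pow_sub_row (r : Fin n) :
    (bMat n K p ^ (n - r)) r = Pi.single ⟨0, r.pos⟩ p := by
  rw [show n - r = (n - 1 - r) + 1 by omega, pow_succ, mul_apply_eq_vecMul,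
    bMat_pow_row_of_lt p r (by omega), single_one_vecMul, row]
  convert bMat_row_last p r.pos using 3
  omega

theorem bMat_pow_self : bMat n K p ^ n = scalar (Fin n) p := by
  ext r c
  rw [← pow_sub_mul_pow _ r.isLt.le, mul_apply_eq_vecMul, bMat_pow_sub_row, single_vecMul, row,
    bMat_pow_row_of_lt p ⟨0, r.pos⟩ (by simp)]
  simp [scalar_apply, diagonal_apply, Pi.single_apply, eq_comm]

theorem bMat_pow_eq_scalar_pow_mul (m : ℕ) :
    bMat n K p ^ m = scalar (Fin n) p ^ (m / n) * bMat n K p ^ (m % n) := by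
  rw [← bMat_pow_self, ← pow_mul, ← pow_add, Nat.div_add_mod]

end bMat

section cyclic

variable {n : ℕ} {K : Type*} [Field K] {σ : K ≃+* K} (p : K)

theorem bMat_mul_iotaMat (hσ : σ ^ n = 1) (a : K) :
    bMat n K p * iotaMat n K σ a = iotaMat n K σ (σ⁻¹ a) * bMat n K p := by
  have hshift (j : ℕ) : (σ⁻¹ ^ j) (σ⁻¹ a) = (σ⁻¹ ^ (j + 1)) a := by rw [pow_succ]; rfl
  ext r c
  simp only [iotaMat_eq_diagonal_inv_pow σ hσ, mul_diagonal, diagonal_mul, bMat, of_apply, hshift]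
  split_ifs with h₁ h₂
  · rw [← h₁, one_mul, mul_one]
  · rw [h₂.2, h₂.1, Nat.sub_add_cancel (by omega), pow_zero, inv_pow, hσ, inv_one, mul_comm]
  · simp

theorem bMat_pow_mul_iotaMat (hσ : σ ^ n = 1) (i : ℕ) (a : K) :
    bMat n K p ^ i * iotaMat n K σ a = iotaMat n K σ ((σ⁻¹ ^ i) a) * bMat n K p ^ i := by
  induction i generalizing a with
  | zero => simp
  | succ i ih =>
    rw [pow_succ' (bMat n K p), mul_assoc, ih, ← mul_assoc, bMat_mul_iotaMat p hσ, mul_assoc,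
      ← pow_succ', pow_succ' σ⁻¹]
    rfl

variable (n K σ)

def cyclicMatrix : (Fin n → K) →+ Matrix (Fin n) (Fin n) K where
  toFun a := ∑ i : Fin n, iotaMat n K σ (a i) * bMat n K p ^ (i : ℕ)
  map_zero' := by simp
  map_add' a a' := by simp [iotaMat_add, add_mul, Finset.sum_add_distrib]

variable {n K σ}

theorem cyclicMatrix_apply (a : Fin n → K) :
    cyclicMatrix n K σ p a = ∑ i : Fin n, iotaMat n K σ (a i) * bMat n K p ^ (i : ℕ) := rfl

theorem cyclicMatrix_single (k : Fin n) (c : K) :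
    cyclicMatrix n K σ p (Pi.single k c) = iotaMat n K σ c * bMat n K p ^ (k : ℕ) := by
  rw [cyclicMatrix_apply, Finset.sum_eq_single k (fun i _ hi => by simp [hi]) (by simp)]
  simp

theorem cyclicMatrix_row_zero (hn : 0 < n) (hσ : σ ^ n = 1) (a : Fin n → K) :
    cyclicMatrix n K σ p a ⟨0, hn⟩ = a := by
  ext j
  simp [cyclicMatrix_apply, Matrix.sum_apply, iotaMat_eq_diagonal_inv_pow σ hσ, diagonal_mul,
    bMat_pow_row_zero, Pi.single_apply, -inv_pow]

theorem cyclicMatrix_injective (hn : 0 < n) (hσ : σ ^ n = 1) :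
    Function.Injective (cyclicMatrix n K σ p) :=
  fun a a' h => by
    rw [← cyclicMatrix_row_zero p hn hσ a, ← cyclicMatrix_row_zero p hn hσ a', h]

theorem iotaMat_mul_bMat_pow_mem_range (hn : 0 < n) (hpfix : σ p = p) (c : K) (m : ℕ) :
    iotaMat n K σ c * bMat n K p ^ m ∈ (cyclicMatrix n K σ p).range := by
  have hfix : σ (p ^ (m / n)) = p ^ (m / n) := by rw [map_pow, hpfix]
  rw [bMat_pow_eq_scalar_pow_mul, ← map_pow, ← iotaMat_of_isFixedPt σ hfix, ← mul_assoc,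
    ← iotaMat_mul, ← cyclicMatrix_single p ⟨m % n, Nat.mod_lt _ hn⟩]
  exact ⟨_, rfl⟩

theorem iotaMat_mul_bMat_pow_mul_iotaMat_mul_bMat_pow (hσ : σ ^ n = 1) (a a' : K) (i j : ℕ) :
    iotaMat n K σ a * bMat n K p ^ i * (iotaMat n K σ a' * bMat n K p ^ j) =
      iotaMat n K σ (a * (σ⁻¹ ^ i) a') * bMat n K p ^ (i + j) := by
  rw [mul_assoc, ← mul_assoc (bMat n K p ^ i), bMat_pow_mul_iotaMat p hσ, iotaMat_mul, pow_add]
  simp only [mul_assoc]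

def cyclicSubring (hn : 0 < n) (hσ : σ ^ n = 1) (hpfix : σ p = p) :
    Subring (Matrix (Fin n) (Fin n) K) :=
  { (cyclicMatrix n K σ p).range with
    one_mem' := by simpa using iotaMat_mul_bMat_pow_mem_range p hn hpfix 1 0
    mul_mem' := by
      rintro _ _ ⟨a, rfl⟩ ⟨a', rfl⟩
      simp only [cyclicMatrix_apply, Finset.sum_mul_sum]
      refine AddSubgroup.sum_mem _ fun i _ => AddSubgroup.sum_mem _ fun j _ => ?_
      rw [iotaMat_mul_bMat_pow_mul_iotaMat_mul_bMat_pow p hσ]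
      exact iotaMat_mul_bMat_pow_mem_range p hn hpfix _ _ }

theorem coe_cyclicSubring (hn : 0 < n) (hσ : σ ^ n = 1) (hpfix : σ p = p) :
    (cyclicSubring p hn hσ hpfix : Set _) = Dset n K σ p := by
  ext x
  simp [cyclicSubring, Dset, cyclicMatrix_apply, eq_comm]

end cyclic

theorem Dset_subring_and_injective_general (n : ℕ) (hn : 1 ≤ n) (K : Type*) [Field K]
    (σ : K ≃+* K) (hσ : σ ^ n = 1) (p : K) (hpfix : σ p = p) :
    (1 ∈ Dset n K σ p) ∧ (0 ∈ Dset n K σ p) ∧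
    (∀ x ∈ Dset n K σ p, ∀ y ∈ Dset n K σ p, x + y ∈ Dset n K σ p) ∧
    (∀ x ∈ Dset n K σ p, -x ∈ Dset n K σ p) ∧
    (∀ x ∈ Dset n K σ p, ∀ y ∈ Dset n K σ p, x * y ∈ Dset n K σ p) ∧
    Function.Injective
      (fun a : Fin n → K => ∑ i : Fin n, iotaMat n K σ (a i) * bMat n K p ^ (i : ℕ)) ∧
    (∀ a a' : Fin n → K,
      (∑ i : Fin n, iotaMat n K σ ((a + a') i) * bMat n K p ^ (i : ℕ)) =
        (∑ i : Fin n, iotaMat n K σ (a i) * bMat n K p ^ (i : ℕ)) +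
        (∑ i : Fin n, iotaMat n K σ (a' i) * bMat n K p ^ (i : ℕ))) := by
  rw [← coe_cyclicSubring p hn hσ hpfix]
  exact ⟨one_mem _, zero_mem _, fun _ hx _ hy => add_mem hx hy, fun _ hx => neg_mem hx,
    fun _ hx _ hy => mul_mem hx hy, cyclicMatrix_injective p hn hσ,
    map_add (cyclicMatrix n K σ p)⟩

/-- `D` is a subring of `M_n(K)`, and the map
`(a_0,…,a_{n-1}) ↦ Σ ι(a_i)·b^i` is injective and additive. -/
theorem Dset_subring_and_injective (n : ℕ) (hn : 1 ≤ n) (K : Type*) [Field K]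
    (σ : K ≃+* K) (hσ : σ ^ n = 1) (p : K) (hp : p ≠ 0) (hpfix : σ p = p) :
    (1 ∈ Dset n K σ p) ∧ (0 ∈ Dset n K σ p) ∧
    (∀ x ∈ Dset n K σ p, ∀ y ∈ Dset n K σ p, x + y ∈ Dset n K σ p) ∧
    (∀ x ∈ Dset n K σ p, -x ∈ Dset n K σ p) ∧
    (∀ x ∈ Dset n K σ p, ∀ y ∈ Dset n K σ p, x * y ∈ Dset n K σ p) ∧
    Function.Injective
      (fun a : Fin n → K => ∑ i : Fin n, iotaMat n K σ (a i) * bMat n K p ^ (i : ℕ)) ∧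
    (∀ a a' : Fin n → K,
      (∑ i : Fin n, iotaMat n K σ ((a + a') i) * bMat n K p ^ (i : ℕ)) =
        (∑ i : Fin n, iotaMat n K σ (a i) * bMat n K p ^ (i : ℕ)) +
        (∑ i : Fin n, iotaMat n K σ (a' i) * bMat n K p ^ (i : ℕ))) :=
  Dset_subring_and_injective_general n hn K σ hσ p hpfix
end

section
/- With notation as above, assume additionally that every nonzero element of D is invertible in M_n(K). Then for any two nonzero vectors v, w ∈ K^n there exists an invertible element d ∈ D with d·(K·v) = K·w; that is, the group D^× = D ∩ GL_n(K) acts transitively on the set of lines in K^n. -/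
theorem aux_sum_mulVec {n : ℕ} {K : Type*} [Field K] {ι : Type*} (s : Finset ι)
    (M : ι → Matrix (Fin n) (Fin n) K) (u : Fin n → K) :
    (∑ i ∈ s, M i).mulVec u = ∑ i ∈ s, (M i).mulVec u := by
  classical
  induction s using Finset.induction with
  | empty => simp [Matrix.zero_mulVec]
  | insert a s h ih => simp [Finset.sum_insert h, Matrix.add_mulVec, ih]

/-- key mulVec formula -/
theorem aux_mulVec {n : ℕ} {K : Type*} [Field K] (σ : K ≃+* K) (p : K)
    (a u : Fin n → K) (j : Fin n) :
    ((∑ i : Fin n, iotaMat n K σ (a i) * bMat n K p ^ (i : ℕ)).mulVec u) j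
      = ∑ i : Fin n, (σ ^ (n - (j : ℕ))) (a i) * ((bMat n K p ^ (i : ℕ)).mulVec u) j := by
  rw [aux_sum_mulVec, Finset.sum_apply]
  refine Finset.sum_congr rfl fun i _ => ?_
  rw [← Matrix.mulVec_mulVec, iotaMat, Matrix.mulVec_diagonal]

/-- powers of b applied to e0 -/
theorem aux_pow_e0 {n : ℕ} {K : Type*} [Field K] (p : K) (hn : 1 ≤ n)
    (k : ℕ) (hk1 : 1 ≤ k) (hk2 : k ≤ n - 1) :
    haveI : NeZero n := ⟨by omega⟩
    (bMat n K p ^ k).mulVec (Pi.single (0 : Fin n) 1)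
      = Pi.single (⟨n - k, by omega⟩ : Fin n) p := by
  haveI : NeZero n := ⟨by omega⟩
  induction k with
  | zero => omega
  | succ k ih =>
    rcases Nat.eq_or_lt_of_le hk1 with h1 | h1
    · have hk0 : k = 0 := by omega
      subst hk0
      rw [pow_one, Matrix.mulVec_single]
      funext j
      simp only [bMat, Matrix.of_apply, Pi.single_apply, Fin.ext_iff, Fin.val_mk, Fin.val_zero, and_true,
        Pi.smul_apply, Matrix.col_apply, op_smul_eq_mul]
      split_ifs <;> first | ring1 | (exfalso; omega) | (exact ‹False›.elim)
    · have hk1' : 1 ≤ k := by omega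
      have hk2' : k ≤ n - 1 := by omega
      rw [pow_succ', ← Matrix.mulVec_mulVec, ih hk1' hk2', Matrix.mulVec_single]
      funext j
      simp only [bMat, Matrix.of_apply, Pi.single_apply, Fin.ext_iff, Fin.val_mk,
        Pi.smul_apply, Matrix.col_apply, op_smul_eq_mul]
      split_ifs <;> first | ring1 | (exfalso; omega) | (exact ‹False›.elim)

/-- if every nonzero element of `D` is invertible, then `D^×` acts
transitively on the set of lines in `K^n`: for nonzero `v, w` there is an
invertible `d ∈ D` with `d·(K·v) = K·w`. -/
theorem Dunits_transitive_on_lines (n : ℕ) (hn : 1 ≤ n) (K : Type*) [Field K]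
    (σ : K ≃+* K) (hσ : σ ^ n = 1) (p : K) (hp : p ≠ 0) (hpfix : σ p = p)
    (hD : ∀ x ∈ Dset n K σ p, x ≠ 0 → IsUnit x) :
    ∀ v w : Fin n → K, v ≠ 0 → w ≠ 0 →
      ∃ d ∈ Dset n K σ p, IsUnit d ∧
        Submodule.map (Matrix.mulVecLin d) (Submodule.span K {v}) =
          Submodule.span K {w} := by
  haveI : NeZero n := ⟨by omega⟩
  intro v w hv hw
  set b := bMat n K p with hb
  set dm : (Fin n → K) → Matrix (Fin n) (Fin n) K :=
    fun a => ∑ i : Fin n, iotaMat n K σ (a i) * b ^ (i : ℕ) with hdm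
  have hdmD : ∀ a, dm a ∈ Dset n K σ p := fun a => ⟨a, rfl⟩
  set e0 : Fin n → K := Pi.single (0 : Fin n) 1 with he0
  have hmv : ∀ (a u : Fin n → K) (j : Fin n),
      (dm a).mulVec u j = ∑ i : Fin n, (σ ^ (n - (j : ℕ))) (a i) * ((b ^ (i : ℕ)).mulVec u) j :=
    fun a u j => aux_mulVec σ p a u j
  -- value of b^i on e0, for i : Fin n, i ≠ 0
  have hbpow : ∀ i : Fin n, ∀ _hi : (i : ℕ) ≠ 0, (b ^ (i : ℕ)).mulVec e0
      = Pi.single (⟨n - (i : ℕ), by have := i.isLt; omega⟩ : Fin n) p := by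
    intro i hi
    exact aux_pow_e0 p hn (i : ℕ) (by omega) (by have := i.isLt; omega)
  -- injectivity: dm a = 0 → a = 0
  have hinj0 : ∀ a : Fin n → K, dm a = 0 → a = 0 := by
    intro a ha
    have h0 : ∀ j, (dm a).mulVec e0 j = 0 := by
      intro j; rw [ha, Matrix.zero_mulVec]; rfl
    funext i
    show a i = 0
    by_cases hi : (i : ℕ) = 0
    · have hi0 : i = 0 := Fin.ext hi
      subst hi0
      have h := h0 0
      rw [hmv, Finset.sum_eq_single (0 : Fin n)] at h
      · have hterm : ((b ^ ((0 : Fin n) : ℕ)).mulVec e0) 0 = 1 := by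
          simp [he0, Matrix.one_mulVec]
        rw [hterm, mul_one] at h
        exact (σ ^ (n - ((0 : Fin n) : ℕ))).injective (h.trans (map_zero _).symm)
      · intro i' _ hi'
        have hi'0 : ((i' : ℕ) ≠ 0) := fun hz => hi' (Fin.ext hz)
        have hlt := i'.isLt
        rw [hbpow i' hi'0, Pi.single_apply,
          if_neg (by simp only [Fin.ext_iff, Fin.val_zero, Fin.val_mk]; omega), mul_zero]
      · intro hmem; exact absurd (Finset.mem_univ _) hmem
    · have hlt := i.isLt
      set j : Fin n := ⟨n - (i : ℕ), by omega⟩ with hj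
      have h := h0 j
      rw [hmv, Finset.sum_eq_single i] at h
      · rw [hbpow i hi, hj, Pi.single_apply, if_pos rfl] at h
        rcases mul_eq_zero.mp h with h' | h'
        · exact (σ ^ (n - (j : ℕ))).injective (h'.trans (map_zero _).symm)
        · exact absurd h' hp
      · intro i' _ hi'
        have hlt' := i'.isLt
        by_cases hi'0 : ((i' : ℕ) = 0)
        · have : (b ^ (i' : ℕ)).mulVec e0 j = 0 := by
            rw [hi'0, pow_zero, Matrix.one_mulVec, he0, Pi.single_apply,
              if_neg (by simp only [hj, Fin.ext_iff, Fin.val_zero, Fin.val_mk]; omega)]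
          rw [this, mul_zero]
        · have hne : ¬ ((i : ℕ) = (i' : ℕ)) := fun hz => hi' (Fin.ext hz.symm)
          rw [hbpow i' hi'0, Pi.single_apply,
            if_neg (by simp only [hj, Fin.ext_iff, Fin.val_mk]; omega), mul_zero]
      · intro hmem; exact absurd (Finset.mem_univ _) hmem
  -- the twisted linear map g
  set u : Fin n → Fin n → K :=
    fun i j => ((σ ^ (n - (j : ℕ))).symm) (((b ^ (i : ℕ)).mulVec v) j) with hu
  set g : (Fin n → K) →ₗ[K] (Fin n → K) :=
    { toFun := fun a j => ∑ i : Fin n, a i * u i j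
      map_add' := by
        intro a a'; funext j
        simp [add_mul, Finset.sum_add_distrib]
      map_smul' := by
        intro c a; funext j
        simp [Finset.mul_sum, mul_assoc] } with hg
  have hgapp : ∀ (a : Fin n → K) (j : Fin n), g a j = ∑ i : Fin n, a i * u i j :=
    fun a j => rfl
  have hrel : ∀ (a : Fin n → K) (j : Fin n),
      (dm a).mulVec v j = (σ ^ (n - (j : ℕ))) (g a j) := by
    intro a j
    rw [hmv, hgapp, map_sum]
    refine Finset.sum_congr rfl fun i _ => ?_
    rw [map_mul, RingEquiv.apply_symm_apply]
  have hginj : Function.Injective g := by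
    rw [← LinearMap.ker_eq_bot, LinearMap.ker_eq_bot']
    intro a ha
    have hmv0 : (dm a).mulVec v = 0 := by
      funext j
      rw [hrel, ha]
      simp
    have hdm0 : dm a = 0 := by
      by_contra hne
      have hunit := hD (dm a) (hdmD a) hne
      have hdet : IsUnit (dm a).det := (Matrix.isUnit_iff_isUnit_det _).mp hunit
      have : v = 0 := by
        have h1 : (dm a)⁻¹ * (dm a) = 1 := Matrix.nonsing_inv_mul _ hdet
        calc v = ((dm a)⁻¹ * (dm a)).mulVec v := by rw [h1, Matrix.one_mulVec]
        _ = ((dm a)⁻¹).mulVec ((dm a).mulVec v) := by rw [Matrix.mulVec_mulVec]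
        _ = 0 := by rw [hmv0, Matrix.mulVec_zero]
      exact hv this
    exact hinj0 a hdm0
  have hgsurj : Function.Surjective g := LinearMap.injective_iff_surjective.mp hginj
  obtain ⟨a, ha⟩ := hgsurj (fun j => ((σ ^ (n - (j : ℕ))).symm) (w j))
  have hdw : (dm a).mulVec v = w := by
    funext j
    rw [hrel, ha]
    exact (σ ^ (n - (j : ℕ))).apply_symm_apply (w j)
  have hne : dm a ≠ 0 := by
    intro h
    exact hw (by rw [← hdw, h, Matrix.zero_mulVec])
  have hunit : IsUnit (dm a) := hD (dm a) (hdmD a) hne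
  refine ⟨dm a, hdmD a, hunit, ?_⟩
  rw [Submodule.map_span, Set.image_singleton]
  congr 1
  rw [Matrix.mulVecLin_apply, hdw]
end

section
/- Let C be a field complete with respect to a nontrivial nonarchimedean absolute value, let K ⊆ C be a subfield that is itself complete with respect to the restricted absolute value and on which the absolute value is nontrivial, let d ≥ 1 and r > 0, and let f(X_1,…,X_d) = Σ_α c_α X^α be a formal power series over C with |c_α| r^{|α|} → 0 as |α| → ∞. If f(x) = 0 for every x ∈ K^d with max_i |x_i| ≤ r, then c_α = 0 for all multi-indices α. -/
open Filter

section Aux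

variable {C : Type*} [NormedField C] [CompleteSpace C] [IsUltrametricDist C]

/-- One-variable principle: if `b n → 0` and `∑' n, b n * t^(k*n) = 0` for all `k`,
with `0 < ‖t‖ < 1`, then all `b n = 0`. -/
lemma aux_one_var {b : ℕ → C} (hb : Tendsto b atTop (nhds 0))
    {t : C} (ht0 : t ≠ 0) (ht1 : ‖t‖ < 1)
    (h : ∀ k : ℕ, ∑' n, b n * t ^ (k * n) = 0) : ∀ n, b n = 0 := by
  have htn : (0:ℝ) ≤ ‖t‖ := norm_nonneg t
  have hnb : Tendsto (fun n => ‖b n‖) atTop (nhds 0) := by simpa using hb.norm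
  obtain ⟨B, hB⟩ := hnb.bddAbove_range
  have hB' : ∀ n, ‖b n‖ ≤ B := fun n => hB (Set.mem_range_self n)
  have hB0 : (0:ℝ) ≤ B := le_trans (norm_nonneg _) (hB' 0)
  intro n
  induction n using Nat.strong_induction_on with
  | _ n IH =>
  have hsum2 : ∀ k : ℕ, Summable (fun j : ℕ => b (n + j) * t ^ (k * j)) := by
    intro k
    apply NonarchimedeanAddGroup.summable_of_tendsto_cofinite_zero
    rw [Nat.cofinite_eq_atTop]
    have h0 : Tendsto (fun j : ℕ => ‖b (n + j)‖) atTop (nhds 0) := by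
      have := hnb.comp (tendsto_add_atTop_nat n)
      simpa [Function.comp_def, Nat.add_comm] using this
    apply squeeze_zero_norm (fun j => ?_) h0
    rw [norm_mul, norm_pow]
    exact mul_le_of_le_one_right (norm_nonneg _) (pow_le_one₀ htn ht1.le)
  have hshift : ∀ k : ℕ, ∑' j : ℕ, b (n + j) * t ^ (k * (n + j)) = 0 := by
    intro k
    rw [Function.Injective.tsum_eq (add_right_injective n)
      (f := fun x => b x * t ^ (k * x)) ?_]
    · exact h k
    · intro x hx
      have hnx : n ≤ x := by
        by_contra hlt
        push_neg at hlt
        exact hx (by simp [IH x hlt])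
      exact ⟨x - n, by show n + (x - n) = x; omega⟩
  have hA : ∀ k : ℕ, ∑' j : ℕ, b (n + j) * t ^ (k * j) = 0 := by
    intro k
    have h2 : (∑' j : ℕ, b (n + j) * t ^ (k * j)) * t ^ (k * n) = 0 := by
      rw [← tsum_mul_right, ← hshift k]
      apply tsum_congr
      intro j
      rw [mul_assoc, ← pow_add]
      congr 2
      ring
    rcases mul_eq_zero.mp h2 with h3 | h3
    · exact h3
    · exact absurd h3 (pow_ne_zero _ ht0)
  have hkey : ∀ k : ℕ, b n = - ∑' j : ℕ, b (n + (j + 1)) * t ^ (k * (j + 1)) := by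
    intro k
    have h4 := Summable.tsum_eq_zero_add (hsum2 k)
    rw [hA k] at h4
    simp only [Nat.mul_zero, pow_zero, mul_one, Nat.add_zero] at h4
    exact eq_neg_of_add_eq_zero_left h4.symm
  have hbound : ∀ k : ℕ, ‖b n‖ ≤ B * ‖t‖ ^ k := by
    intro k
    rw [hkey k, norm_neg]
    apply IsUltrametricDist.norm_tsum_le_of_forall_le_of_nonneg
      (mul_nonneg hB0 (pow_nonneg htn k))
    intro j
    rw [norm_mul, norm_pow]
    refine mul_le_mul (hB' _) (pow_le_pow_of_le_one htn ht1.le ?_)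
      (pow_nonneg htn _) hB0
    rw [Nat.mul_succ]
    omega
  have hlim : Tendsto (fun k : ℕ => B * ‖t‖ ^ k) atTop (nhds 0) := by
    simpa using (tendsto_pow_atTop_nhds_zero_of_lt_one htn ht1).const_mul B
  have hle : ‖b n‖ ≤ 0 := ge_of_tendsto' hlim hbound
  exact norm_le_zero_iff.mp hle

end Aux

/-- digits base `M` are unique -/
lemma aux_digits : ∀ (d : ℕ) (M : ℕ) (α β : Fin d → ℕ),
    (∀ i, α i < M) → (∀ i, β i < M) →
    (∑ i, α i * M ^ (i : ℕ)) = (∑ i, β i * M ^ (i : ℕ)) → α = β := by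
  intro d
  induction d with
  | zero => intro M α β _ _ _; funext i; exact i.elim0
  | succ d IH =>
    intro M α β hα hβ hs
    have hM : 0 < M := lt_of_le_of_lt (Nat.zero_le _) (hα 0)
    rw [Fin.sum_univ_succ, Fin.sum_univ_succ] at hs
    simp only [Fin.val_zero, pow_zero, mul_one, Fin.val_succ, pow_succ] at hs
    have e1 : ∀ (γ : Fin (d+1) → ℕ), ∑ i : Fin d, γ i.succ * (M ^ (i:ℕ) * M)
        = (∑ i : Fin d, γ i.succ * M ^ (i:ℕ)) * M := by
      intro γ
      rw [Finset.sum_mul]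
      exact Finset.sum_congr rfl (fun i _ => by ring)
    rw [e1 α, e1 β] at hs
    have h0 : α 0 = β 0 := by
      have h5 := congrArg (· % M) hs
      simpa [Nat.add_mul_mod_self_right, Nat.mod_eq_of_lt (hα 0),
        Nat.mod_eq_of_lt (hβ 0)] using h5
    have hAB : (∑ i : Fin d, α i.succ * M ^ (i:ℕ)) = ∑ i : Fin d, β i.succ * M ^ (i:ℕ) := by
      rw [h0] at hs
      exact Nat.eq_of_mul_eq_mul_right hM (Nat.add_left_cancel hs)
    have htail := IH M (fun i => α i.succ) (fun i => β i.succ)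
      (fun i => hα _) (fun i => hβ _) hAB
    funext i
    refine Fin.cases ?_ ?_ i
    · exact h0
    · intro j
      exact congrFun htail j

/-- a multivariable power series over a complete nonarchimedean
field `C`, converging on the closed polydisk of radius `r` (i.e.
`‖c_α‖ r^{|α|} → 0` as `|α| → ∞`), which vanishes at every point of the
polydisk with coordinates in a complete subfield `K` on which the absolute
value is nontrivial, has all coefficients zero. -/
theorem polydisk_rational_points_zariski_dense (C : Type*) [NormedField C]
    [CompleteSpace C]
    (hna : ∀ a b : C, ‖a + b‖ ≤ max ‖a‖ ‖b‖)
    (K : Subfield C) (hKcomplete : IsComplete (K : Set C))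
    (hKnontriv : ∃ x : C, x ∈ K ∧ x ≠ 0 ∧ ‖x‖ ≠ 1)
    (d : ℕ) (hd : 1 ≤ d) (r : ℝ) (hr : 0 < r)
    (c : (Fin d → ℕ) → C)
    (hc : ∀ ε : ℝ, 0 < ε → ∃ N : ℕ, ∀ α : Fin d → ℕ,
      N ≤ ∑ i, α i → ‖c α‖ * r ^ (∑ i, α i) < ε)
    (hzero : ∀ x : Fin d → C, (∀ i, x i ∈ K) → (∀ i, ‖x i‖ ≤ r) →
      ∑' α : Fin d → ℕ, c α * ∏ i, x i ^ α i = 0) :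
    ∀ α, c α = 0 := by
  haveI : IsUltrametricDist C :=
    IsUltrametricDist.isUltrametricDist_of_forall_norm_add_le_max_norm hna
  obtain ⟨x, hxK, hx0, hx1⟩ := hKnontriv
  obtain ⟨t, htK, ht0, ht1⟩ : ∃ t : C, t ∈ K ∧ t ≠ 0 ∧ ‖t‖ < 1 := by
    rcases lt_or_gt_of_ne hx1 with h | h
    · exact ⟨x, hxK, hx0, h⟩
    · refine ⟨x⁻¹, K.inv_mem hxK, inv_ne_zero hx0, ?_⟩
      rw [norm_inv]
      exact inv_lt_one_of_one_lt₀ h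
  have htpos : (0:ℝ) < ‖t‖ := norm_pos_iff.mpr ht0
  have hone : ‖t‖ ≤ 1 := ht1.le
  obtain ⟨k0, hk0⟩ : ∃ k0 : ℕ, ‖t‖ ^ k0 ≤ r := by
    obtain ⟨n, hn⟩ := exists_pow_lt_of_lt_one hr ht1
    exact ⟨n, hn.le⟩
  intro α₀
  set m : ℕ := ∑ i, α₀ i with hm
  set M : ℕ := m + 1 with hMdef
  -- the series vanishes at the special points x i = t ^ (k + k0 + l * M ^ i)
  have hglob : ∀ k l : ℕ,
      ∑' β : Fin d → ℕ, c β * t ^ ((k + k0) * (∑ i, β i)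
        + l * ∑ i, β i * M ^ (i : ℕ)) = 0 := by
    intro k l
    have hz := hzero (fun i => t ^ (k + k0 + l * M ^ (i : ℕ)))
      (fun i => pow_mem htK _)
      (fun i => by
        rw [norm_pow]
        refine le_trans (pow_le_pow_of_le_one htpos.le hone ?_) hk0
        omega)
    rw [← hz]
    apply tsum_congr
    intro β
    congr 1
    have e1 : ∀ i : Fin d, (t ^ (k + k0 + l * M ^ (i:ℕ))) ^ β i
        = t ^ ((k + k0 + l * M ^ (i:ℕ)) * β i) := fun i => by rw [← pow_mul]
    calc t ^ ((k + k0) * (∑ i, β i) + l * ∑ i, β i * M ^ (i:ℕ))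
        = t ^ (∑ i : Fin d, (k + k0 + l * M ^ (i:ℕ)) * β i) := by
          congr 1
          rw [Finset.mul_sum, Finset.mul_sum, ← Finset.sum_add_distrib]
          exact Finset.sum_congr rfl fun i _ => by ring
      _ = ∏ i : Fin d, t ^ ((k + k0 + l * M ^ (i:ℕ)) * β i) :=
          (Finset.prod_pow_eq_pow_sum _ _ _).symm
      _ = ∏ i : Fin d, (t ^ (k + k0 + l * M ^ (i:ℕ))) ^ β i :=
          Finset.prod_congr rfl fun i _ => (e1 i).symm
  -- a norm bound for the terms
  have hnormbound : ∀ (β : Fin d → ℕ) (e : ℕ), k0 * (∑ i, β i) ≤ e →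
      ‖c β * t ^ e‖ ≤ ‖c β‖ * r ^ (∑ i, β i) := by
    intro β e he
    rw [norm_mul, norm_pow]
    refine mul_le_mul_of_nonneg_left ?_ (norm_nonneg _)
    calc ‖t‖ ^ e ≤ ‖t‖ ^ (k0 * (∑ i, β i)) := pow_le_pow_of_le_one htpos.le hone he
      _ = (‖t‖ ^ k0) ^ (∑ i, β i) := by rw [← pow_mul]
      _ ≤ r ^ (∑ i, β i) := pow_le_pow_left₀ (pow_nonneg htpos.le _) hk0 _
  -- finiteness of sublevel sets of the degree
  have hfin : ∀ N : ℕ, {β : Fin d → ℕ | (∑ i, β i) < N}.Finite := by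
    intro N
    apply Set.Finite.subset (Set.Finite.pi (t := fun _ : Fin d => Set.Iio N)
      (fun _ => Set.finite_Iio N))
    intro β hβ
    simp only [Set.mem_setOf_eq] at hβ
    rw [Set.mem_univ_pi]
    intro i
    exact lt_of_le_of_lt
      (Finset.single_le_sum (fun j _ => Nat.zero_le (β j)) (Finset.mem_univ i)) hβ
  -- summability of the full series at the special points
  have hsummable : ∀ k l : ℕ, Summable (fun β : Fin d → ℕ =>
      c β * t ^ ((k + k0) * (∑ i, β i) + l * ∑ i, β i * M ^ (i : ℕ))) := by
    intro k l
    apply NonarchimedeanAddGroup.summable_of_tendsto_cofinite_zero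
    rw [NormedAddCommGroup.tendsto_nhds_zero]
    intro ε hε
    obtain ⟨N, hN⟩ := hc ε hε
    rw [Filter.eventually_cofinite]
    apply Set.Finite.subset (hfin N)
    intro β hβ
    simp only [Set.mem_setOf_eq, not_lt] at hβ
    simp only [Set.mem_setOf_eq]
    by_contra hcon
    push_neg at hcon
    have hle : k0 * (∑ i, β i) ≤ (k + k0) * (∑ i, β i) + l * ∑ i, β i * M ^ (i : ℕ) :=
      le_trans (Nat.mul_le_mul (Nat.le_add_left k0 k) (le_refl _)) (Nat.le_add_right _ _)
    exact absurd hβ (not_le.mpr (lt_of_le_of_lt (hnormbound β _ hle) (hN β hcon)))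
  -- fibers of the degree map are finite
  have hfibfin : ∀ n : ℕ, ((fun β : Fin d → ℕ => ∑ i, β i) ⁻¹' {n}).Finite := by
    intro n
    apply (hfin (n+1)).subset
    intro β hβ
    simp only [Set.mem_preimage, Set.mem_singleton_iff] at hβ
    simp only [Set.mem_setOf_eq]
    omega
  -- first application of the one-variable principle: each "degree block" vanishes
  have hBl : ∀ l n : ℕ,
      (∑' β : ((fun β : Fin d → ℕ => ∑ i, β i) ⁻¹' {n}),
        c ↑β * t ^ (k0 * n + l * ∑ i, (↑β : Fin d → ℕ) i * M ^ (i : ℕ))) = 0 := by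
    intro l
    refine aux_one_var ?_ ht0 ht1 ?_
    · -- the blocks tend to zero
      rw [NormedAddCommGroup.tendsto_nhds_zero]
      intro ε hε
      obtain ⟨N, hN⟩ := hc (ε/2) (by linarith)
      rw [eventually_atTop]
      refine ⟨N, fun n hn => ?_⟩
      refine lt_of_le_of_lt
        (IsUltrametricDist.norm_tsum_le_of_forall_le_of_nonneg (by linarith) ?_)
        (by linarith : ε/2 < ε)
      intro β
      have hβmem : (∑ i, (β : Fin d → ℕ) i) = n := β.2
      refine le_trans (hnormbound (↑β) _ ?_) ?_
      · rw [hβmem]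
        exact Nat.le_add_right _ _
      · rw [hβmem]
        have : N ≤ ∑ i, (β : Fin d → ℕ) i := by omega
        have h8 := hN (↑β) this
        rw [hβmem] at h8
        exact h8.le
    · -- the blocks sum against t^(k*n) to zero
      intro k
      have hhs : HasSum (fun β : Fin d → ℕ =>
          c β * t ^ ((k + k0) * (∑ i, β i) + l * ∑ i, β i * M ^ (i:ℕ))) 0 := by
        have h9 := (hsummable k l).hasSum
        rwa [hglob k l] at h9
      have hfw := hhs.tsum_fiberwise (fun β => ∑ i, β i)
      have heq : (fun n : ℕ => ∑' β : ((fun β : Fin d → ℕ => ∑ i, β i) ⁻¹' {n}),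
          c ↑β * t ^ ((k + k0) * (∑ i, (↑β : Fin d → ℕ) i)
            + l * ∑ i, (↑β : Fin d → ℕ) i * M ^ (i:ℕ)))
          = fun n : ℕ => (∑' β : ((fun β : Fin d → ℕ => ∑ i, β i) ⁻¹' {n}),
            c ↑β * t ^ (k0 * n + l * ∑ i, (↑β : Fin d → ℕ) i * M ^ (i:ℕ))) * t ^ (k * n) := by
        funext n
        rw [← tsum_mul_right]
        apply tsum_congr
        intro β
        have hβmem : (∑ i, (β : Fin d → ℕ) i) = n := β.2
        rw [hβmem, mul_assoc, ← pow_add]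
        congr 2
        ring
      rw [heq] at hfw
      exact hfw.tsum_eq
  -- divide out t^(k0*m)
  have hFl : ∀ l : ℕ,
      (∑' β : ((fun β : Fin d → ℕ => ∑ i, β i) ⁻¹' {m}),
        c ↑β * t ^ (l * ∑ i, (↑β : Fin d → ℕ) i * M ^ (i : ℕ))) = 0 := by
    intro l
    have h5 := hBl l m
    have h6 : (∑' β : ((fun β : Fin d → ℕ => ∑ i, β i) ⁻¹' {m}),
        c ↑β * t ^ (k0 * m + l * ∑ i, (↑β : Fin d → ℕ) i * M ^ (i:ℕ)))
        = t ^ (k0 * m) * ∑' β : ((fun β : Fin d → ℕ => ∑ i, β i) ⁻¹' {m}),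
          c ↑β * t ^ (l * ∑ i, (↑β : Fin d → ℕ) i * M ^ (i:ℕ)) := by
      rw [← tsum_mul_left]
      apply tsum_congr
      intro β
      rw [pow_add]
      ring
    rw [h6] at h5
    rcases mul_eq_zero.mp h5 with h7 | h7
    · exact absurd h7 (pow_ne_zero _ ht0)
    · exact h7
  -- second application of the one-variable principle, on the finite degree-m fiber
  haveI hfinm : Finite ((fun β : Fin d → ℕ => ∑ i, β i) ⁻¹' {m} : Set (Fin d → ℕ)) :=
    (hfibfin m).to_subtype
  have hb'zero : ∀ n : ℕ,
      (∑' y : (((fun β : ((fun β : Fin d → ℕ => ∑ i, β i) ⁻¹' {m}) =>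
          ∑ i, (↑β : Fin d → ℕ) i * M ^ (i:ℕ)) ⁻¹' {n})), c ↑↑y) = 0 := by
    refine aux_one_var ?_ ht0 ht1 ?_
    · -- eventually zero
      have hvanish : ∀ n : ℕ, (∑ i : Fin d, m * M ^ (i:ℕ)) < n →
          (∑' y : (((fun β : ((fun β : Fin d → ℕ => ∑ i, β i) ⁻¹' {m}) =>
            ∑ i, (↑β : Fin d → ℕ) i * M ^ (i:ℕ)) ⁻¹' {n})), c ↑↑y) = 0 := by
        intro n hn
        haveI : IsEmpty (((fun β : ((fun β : Fin d → ℕ => ∑ i, β i) ⁻¹' {m}) =>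
            ∑ i, (↑β : Fin d → ℕ) i * M ^ (i:ℕ)) ⁻¹' {n}) : Set _) := by
          constructor
          intro y
          have hy : (∑ i, (↑(↑y : ((fun β : Fin d → ℕ => ∑ i, β i) ⁻¹' {m})) : Fin d → ℕ) i
              * M ^ (i:ℕ)) = n := y.2
          have hdm : (∑ i, (↑(↑y : ((fun β : Fin d → ℕ => ∑ i, β i) ⁻¹' {m})) : Fin d → ℕ) i) = m :=
            (↑y : ((fun β : Fin d → ℕ => ∑ i, β i) ⁻¹' {m})).2
          have hle2 : n ≤ ∑ i : Fin d, m * M ^ (i:ℕ) := by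
            rw [← hy]
            refine Finset.sum_le_sum fun i _ => Nat.mul_le_mul_right _ ?_
            calc (↑(↑y : ((fun β : Fin d → ℕ => ∑ i, β i) ⁻¹' {m})) : Fin d → ℕ) i
                ≤ ∑ j, (↑(↑y : ((fun β : Fin d → ℕ => ∑ i, β i) ⁻¹' {m})) : Fin d → ℕ) j :=
                  Finset.single_le_sum (fun j _ => Nat.zero_le _) (Finset.mem_univ i)
              _ = m := hdm
          omega
        exact tsum_empty
      refine tendsto_const_nhds.congr' ?_
      rw [Filter.eventuallyEq_iff_exists_mem]
      exact ⟨Set.Ici ((∑ i : Fin d, m * M ^ (i:ℕ)) + 1), Filter.Ici_mem_atTop _,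
        fun n hn => (hvanish n (by exact Nat.lt_of_lt_of_le (Nat.lt_succ_self _) hn)).symm⟩
    · -- the weight blocks sum against t^(l*n) to zero
      intro l
      have hhs : HasSum (fun β : ((fun β : Fin d → ℕ => ∑ i, β i) ⁻¹' {m}) =>
          c ↑β * t ^ (l * ∑ i, (↑β : Fin d → ℕ) i * M ^ (i:ℕ))) 0 := by
        have h9 := (Summable.of_finite (L := SummationFilter.unconditional _) (f := fun β : ((fun β : Fin d → ℕ => ∑ i, β i) ⁻¹' {m}) =>
          c ↑β * t ^ (l * ∑ i, (↑β : Fin d → ℕ) i * M ^ (i:ℕ)))).hasSum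
        rwa [hFl l] at h9
      have hfw := hhs.tsum_fiberwise (fun β => ∑ i, (↑β : Fin d → ℕ) i * M ^ (i:ℕ))
      have heq : (fun n : ℕ => ∑' y : (((fun β : ((fun β : Fin d → ℕ => ∑ i, β i) ⁻¹' {m}) =>
          ∑ i, (↑β : Fin d → ℕ) i * M ^ (i:ℕ)) ⁻¹' {n})),
            c ↑↑y * t ^ (l * ∑ i, (↑(↑y : ((fun β : Fin d → ℕ => ∑ i, β i) ⁻¹' {m})) : Fin d → ℕ) i * M ^ (i:ℕ)))
          = fun n : ℕ => (∑' y : (((fun β : ((fun β : Fin d → ℕ => ∑ i, β i) ⁻¹' {m}) =>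
            ∑ i, (↑β : Fin d → ℕ) i * M ^ (i:ℕ)) ⁻¹' {n})), c ↑↑y) * t ^ (l * n) := by
        funext n
        rw [← tsum_mul_right]
        apply tsum_congr
        intro y
        have hy : (∑ i, (↑(↑y : ((fun β : Fin d → ℕ => ∑ i, β i) ⁻¹' {m})) : Fin d → ℕ) i
            * M ^ (i:ℕ)) = n := y.2
        rw [hy]
      rw [heq] at hfw
      exact hfw.tsum_eq
  -- extract the coefficient
  have hmem : α₀ ∈ ((fun β : Fin d → ℕ => ∑ i, β i) ⁻¹' {m}) := by
    simp only [Set.mem_preimage, Set.mem_singleton_iff, hm]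
  have hmem2 : (⟨α₀, hmem⟩ : ((fun β : Fin d → ℕ => ∑ i, β i) ⁻¹' {m}))
      ∈ ((fun β : ((fun β : Fin d → ℕ => ∑ i, β i) ⁻¹' {m}) =>
        ∑ i, (↑β : Fin d → ℕ) i * M ^ (i:ℕ)) ⁻¹' {∑ i, α₀ i * M ^ (i:ℕ)}) := rfl
  have hfinal := hb'zero (∑ i, α₀ i * M ^ (i:ℕ))
  rw [tsum_eq_single (⟨⟨α₀, hmem⟩, hmem2⟩ :
      (((fun β : ((fun β : Fin d → ℕ => ∑ i, β i) ⁻¹' {m}) =>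
        ∑ i, (↑β : Fin d → ℕ) i * M ^ (i:ℕ)) ⁻¹' {∑ i, α₀ i * M ^ (i:ℕ)})))
      ?_] at hfinal
  · exact hfinal
  · intro y hy
    exfalso
    apply hy
    have hdm : (∑ i, (↑(↑y : ((fun β : Fin d → ℕ => ∑ i, β i) ⁻¹' {m})) : Fin d → ℕ) i) = m :=
      (↑y : ((fun β : Fin d → ℕ => ∑ i, β i) ⁻¹' {m})).2
    have hwy : (∑ i, (↑(↑y : ((fun β : Fin d → ℕ => ∑ i, β i) ⁻¹' {m})) : Fin d → ℕ) i
        * M ^ (i:ℕ)) = ∑ i, α₀ i * M ^ (i:ℕ) := y.2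
    have hβeq : (↑(↑y : ((fun β : Fin d → ℕ => ∑ i, β i) ⁻¹' {m})) : Fin d → ℕ) = α₀ := by
      refine aux_digits d M _ _ ?_ ?_ hwy
      · intro i
        have := Finset.single_le_sum
          (fun j _ => Nat.zero_le ((↑(↑y : ((fun β : Fin d → ℕ => ∑ i, β i) ⁻¹' {m})) : Fin d → ℕ) j))
          (Finset.mem_univ i)
        omega
      · intro i
        have := Finset.single_le_sum (fun j _ => Nat.zero_le (α₀ j)) (Finset.mem_univ i)
        omega
    apply Subtype.ext
    apply Subtype.ext
    exact hβeq
end
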